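/- Let S, Y be symmetric positive definite n×n matrices with ‖S^{1/2} Y S^{1/2} − I‖_F ≤ δ, let D ≻ 0 be symmetric positive definite, and let Δκ > 0 with S̄ = S − Δκ·D ≻ 0. If Δκ·Tr(D Y) = β, then ‖S̄^{1/2} Y S̄^{1/2} − I‖_F ≤ δ + β. -/

import Mathlib

open Matrix

/-- Frobenius norm of a real square matrix. -/
noncomputable def frob {n : ℕ} (A : Matrix (Fin n) (Fin n) ℝ) : ℝ :=
  Real.sqrt (Matrix.trace (Aᵀ * A))
/-- The square root of a positive semidefinite matrix, as `Matrix.PosSemidef.sqrt` was defined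
in the older Mathlib (removed since). -/
noncomputable def Matrix.PosSemidef.sqrt {n : ℕ} {A : Matrix (Fin n) (Fin n) ℝ}
    (hA : A.PosSemidef) : Matrix (Fin n) (Fin n) ℝ :=
  hA.1.eigenvectorUnitary.1 * diagonal ((↑) ∘ (√·) ∘ hA.1.eigenvalues) *
    (star hA.1.eigenvectorUnitary : Matrix (Fin n) (Fin n) ℝ)

lemma Matrix.PosSemidef.sqrt_isHermitian' {n : ℕ} {A : Matrix (Fin n) (Fin n) ℝ}
    (hA : A.PosSemidef) : hA.sqrt.IsHermitian := by
  unfold Matrix.PosSemidef.sqrt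
  rw [IsHermitian, conjTranspose_mul, conjTranspose_mul, diagonal_conjTranspose]
  simp only [← star_eq_conjTranspose, star_star, star_trivial, Matrix.mul_assoc]

lemma Matrix.PosSemidef.sqrt_mul_self' {n : ℕ} {A : Matrix (Fin n) (Fin n) ℝ}
    (hA : A.PosSemidef) : hA.sqrt * hA.sqrt = A := by
  unfold Matrix.PosSemidef.sqrt
  conv_rhs => rw [hA.1.spectral_theorem, Unitary.conjStarAlgAut_apply]
  have hU : (star hA.1.eigenvectorUnitary : Matrix (Fin n) (Fin n) ℝ) * hA.1.eigenvectorUnitary.1 = 1 :=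
    Unitary.coe_star_mul_self _
  calc _ = hA.1.eigenvectorUnitary.1 * (diagonal ((↑) ∘ (√·) ∘ hA.1.eigenvalues) *
      ((star hA.1.eigenvectorUnitary : Matrix (Fin n) (Fin n) ℝ) * hA.1.eigenvectorUnitary.1) *
      diagonal ((↑) ∘ (√·) ∘ hA.1.eigenvalues)) * (star hA.1.eigenvectorUnitary : Matrix (Fin n) (Fin n) ℝ) := by
        simp only [Matrix.mul_assoc]
    _ = _ := by
      rw [hU, Matrix.mul_one, diagonal_mul_diagonal]
      congr 3
      funext i
      simp [Real.mul_self_sqrt (hA.eigenvalues_nonneg i)]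

lemma frob_trace_eq {n : ℕ} (A : Matrix (Fin n) (Fin n) ℝ) :
    Matrix.trace (Aᵀ * A) = ∑ p : Fin n × Fin n, (A p.1 p.2) ^ 2 := by
  rw [Matrix.trace, Fintype.sum_prod_type]
  simp only [Matrix.diag, Matrix.mul_apply, Matrix.transpose_apply, sq]
  exact Finset.sum_comm

/-- The matrix viewed as a point of Euclidean space. -/
noncomputable def toE {n : ℕ} (A : Matrix (Fin n) (Fin n) ℝ) : EuclideanSpace ℝ (Fin n × Fin n) :=
  (WithLp.equiv 2 ((Fin n × Fin n) → ℝ)).symm (fun p => A p.1 p.2)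

lemma toE_add {n : ℕ} (A B : Matrix (Fin n) (Fin n) ℝ) : toE (A + B) = toE A + toE B := by
  rw [toE, toE, toE, WithLp.equiv_symm_apply, ← WithLp.toLp_add]; rfl

lemma toE_smul {n : ℕ} (c : ℝ) (A : Matrix (Fin n) (Fin n) ℝ) : toE (c • A) = c • toE A := by
  rw [toE, toE, WithLp.equiv_symm_apply, ← WithLp.toLp_smul]; rfl

/-- `frob` as a Euclidean norm. -/
lemma frob_eq_norm {n : ℕ} (A : Matrix (Fin n) (Fin n) ℝ) : frob A = ‖toE A‖ := by
  rw [frob, frob_trace_eq, EuclideanSpace.norm_eq]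
  congr 1
  exact Finset.sum_congr rfl fun p _ => by simp [toE, Real.norm_eq_abs, sq_abs]

lemma frob_add_le {n : ℕ} (A B : Matrix (Fin n) (Fin n) ℝ) :
    frob (A + B) ≤ frob A + frob B := by
  rw [frob_eq_norm, frob_eq_norm, frob_eq_norm, toE_add]
  exact norm_add_le _ _

lemma frob_smul {n : ℕ} (c : ℝ) (A : Matrix (Fin n) (Fin n) ℝ) :
    frob (c • A) = |c| * frob A := by
  rw [frob_eq_norm, frob_eq_norm, toE_smul, norm_smul, Real.norm_eq_abs]

lemma frob_sub_le {n : ℕ} (A B : Matrix (Fin n) (Fin n) ℝ) :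
    frob (A - B) ≤ frob A + frob B := by
  have h : A - B = A + (-1 : ℝ) • B := by rw [neg_one_smul]; exact sub_eq_add_neg A B
  rw [h]
  calc frob (A + (-1 : ℝ) • B) ≤ frob A + frob ((-1 : ℝ) • B) := frob_add_le _ _
    _ = frob A + frob B := by rw [frob_smul]; norm_num

/-- For a positive semidefinite matrix, the Frobenius norm is at most the trace. -/
lemma frob_le_trace {n : ℕ} {P : Matrix (Fin n) (Fin n) ℝ} (hP : P.PosSemidef) :
    frob P ≤ Matrix.trace P := by
  obtain ⟨B, hB⟩ : ∃ B, P = Bᴴ * B := ⟨hP.sqrt, by rw [hP.sqrt_isHermitian'.eq, hP.sqrt_mul_self']⟩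
  have hentry : ∀ i j, P i j = ∑ k, B k i * B k j := by
    intro i j
    rw [hB, Matrix.mul_apply]
    refine Finset.sum_congr rfl fun k _ => ?_
    simp [Matrix.conjTranspose_apply]
  have hdiag : ∀ i, 0 ≤ P i i := fun i => by
    rw [hentry]
    exact Finset.sum_nonneg fun k _ => mul_self_nonneg _
  have htr : 0 ≤ Matrix.trace P := Finset.sum_nonneg fun i _ => hdiag i
  rw [frob, frob_trace_eq]
  have key : ∑ p : Fin n × Fin n, (P p.1 p.2) ^ 2 ≤ (Matrix.trace P) ^ 2 := by
    have h2 : (Matrix.trace P) ^ 2 = ∑ p : Fin n × Fin n, P p.1 p.1 * P p.2 p.2 := by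
      rw [Matrix.trace, sq, Fintype.sum_prod_type, Finset.sum_mul_sum]
      rfl
    rw [h2]
    refine Finset.sum_le_sum fun p _ => ?_
    rw [hentry p.1 p.2, hentry p.1 p.1, hentry p.2 p.2]
    calc (∑ k, B k p.1 * B k p.2) ^ 2
        ≤ (∑ k, B k p.1 ^ 2) * ∑ k, B k p.2 ^ 2 :=
          Finset.sum_mul_sq_le_sq_mul_sq Finset.univ _ _
      _ = (∑ k, B k p.1 * B k p.1) * ∑ k, B k p.2 * B k p.2 := by simp [sq]
  calc Real.sqrt (∑ p : Fin n × Fin n, (P p.1 p.2) ^ 2)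
      ≤ Real.sqrt ((Matrix.trace P) ^ 2) := Real.sqrt_le_sqrt key
    _ = |Matrix.trace P| := Real.sqrt_sq_eq_abs _
    _ = Matrix.trace P := abs_of_nonneg htr

lemma sqrt_transpose {n : ℕ} {A : Matrix (Fin n) (Fin n) ℝ} (hA : A.PosSemidef) :
    hA.sqrt ᵀ = hA.sqrt := by
  have := hA.sqrt_isHermitian'
  rwa [Matrix.IsHermitian, conjTranspose_eq_transpose_of_trivial] at this

/-- Key trace identity for conjugated matrices. -/
lemma frob_conj {n : ℕ} {A : Matrix (Fin n) (Fin n) ℝ} (hA : A.PosSemidef)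
    {B : Matrix (Fin n) (Fin n) ℝ} (hB : Bᵀ = B) :
    frob (hA.sqrt * B * hA.sqrt - 1)
      = Real.sqrt (Matrix.trace (A * B * A * B) - 2 * Matrix.trace (A * B) + n) := by
  set Q := hA.sqrt with hQdef
  have hQ : Qᵀ = Q := sqrt_transpose hA
  have hQQ : Q * Q = A := hA.sqrt_mul_self'
  have hMt : (Q * B * Q)ᵀ = Q * B * Q := by
    rw [Matrix.transpose_mul, Matrix.transpose_mul, hQ, hB, Matrix.mul_assoc]
  rw [frob]
  congr 1
  rw [Matrix.transpose_sub, Matrix.transpose_one, hMt]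
  have expand : (Q * B * Q - 1) * (Q * B * Q - 1)
      = Q * B * Q * (Q * B * Q) - Q * B * Q - Q * B * Q + 1 := by noncomm_ring
  rw [expand, Matrix.trace_add, Matrix.trace_sub, Matrix.trace_sub, Matrix.trace_one]
  have e1 : Q * B * Q * (Q * B * Q) = (Q * B) * (A * (B * Q)) := by
    rw [← hQQ]; noncomm_ring
  have h1 : Matrix.trace (Q * B * Q * (Q * B * Q)) = Matrix.trace (A * B * A * B) := by
    rw [e1, Matrix.trace_mul_comm]
    have e2 : A * (B * Q) * (Q * B) = A * B * A * B := by rw [← hQQ]; noncomm_ring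
    rw [e2]
  have h2 : Matrix.trace (Q * B * Q) = Matrix.trace (A * B) := by
    rw [Matrix.trace_mul_comm, ← Matrix.mul_assoc, hQQ]
  rw [h1, h2, Fintype.card_fin]
  ring

/-- Approximate-centering perturbation step: if `‖S^{1/2} Y S^{1/2} − I‖_F ≤ δ`,
`S̄ = S − Δκ·D ≻ 0` and `Δκ·Tr(DY) = β`, then `‖S̄^{1/2} Y S̄^{1/2} − I‖_F ≤ δ + β`. -/
theorem stmt19 {n : ℕ} (S Y D : Matrix (Fin n) (Fin n) ℝ)
    (hS : S.PosDef) (hY : Y.PosDef) (hD : D.PosDef)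
    (δ β Δκ : ℝ) (hΔκ : 0 < Δκ)
    (hδ : frob ((Matrix.PosSemidef.sqrt hS.posSemidef) * Y * (Matrix.PosSemidef.sqrt hS.posSemidef) - 1) ≤ δ)
    (hSbar : (S - Δκ • D).PosDef)
    (hβ : Δκ * Matrix.trace (D * Y) = β) :
    frob ((Matrix.PosSemidef.sqrt hSbar.posSemidef) * Y * (Matrix.PosSemidef.sqrt hSbar.posSemidef) - 1) ≤ δ + β := by
  have hYt : Yᵀ = Y := by
    have := hY.posSemidef.1
    rwa [Matrix.IsHermitian, conjTranspose_eq_transpose_of_trivial] at this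
  have hSt : Sᵀ = S := by
    have := hS.posSemidef.1
    rwa [Matrix.IsHermitian, conjTranspose_eq_transpose_of_trivial] at this
  have hSbt : (S - Δκ • D)ᵀ = S - Δκ • D := by
    have := hSbar.posSemidef.1
    rwa [Matrix.IsHermitian, conjTranspose_eq_transpose_of_trivial] at this
  set sY := hY.posSemidef.sqrt with hsYdef
  have hsYt : sY ᵀ = sY := sqrt_transpose hY.posSemidef
  have hsYY : sY * sY = Y := hY.posSemidef.sqrt_mul_self'
  -- swap lemma: conjugation by √M vs conjugation by √Y gives the same Frobenius distance
  have swap : ∀ (M : Matrix (Fin n) (Fin n) ℝ) (hM : M.PosSemidef), Mᵀ = M →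
      frob (hM.sqrt * Y * hM.sqrt - 1) = frob (sY * M * sY - 1) := by
    intro M hM hMt
    rw [frob_conj hM hYt, frob_conj hY.posSemidef hMt]
    have t1 : Matrix.trace (M * Y * M * Y) = Matrix.trace (Y * M * Y * M) := by
      rw [Matrix.trace_mul_comm]
      congr 1
      noncomm_ring
    have t2 : Matrix.trace (M * Y) = Matrix.trace (Y * M) := Matrix.trace_mul_comm _ _
    rw [t1, t2]
  -- rewrite both conjugated norms
  have h1 : frob (hSbar.posSemidef.sqrt * Y * hSbar.posSemidef.sqrt - 1)
      = frob (sY * (S - Δκ • D) * sY - 1) := swap _ hSbar.posSemidef hSbt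
  have h2 : frob (hS.posSemidef.sqrt * Y * hS.posSemidef.sqrt - 1)
      = frob (sY * S * sY - 1) := swap _ hS.posSemidef hSt
  have decomp : sY * (S - Δκ • D) * sY - 1
      = (sY * S * sY - 1) - Δκ • (sY * D * sY) := by
    rw [Matrix.mul_sub, Matrix.sub_mul]
    simp only [Matrix.smul_mul, Matrix.mul_smul]
    abel
  -- PSD bound
  have hPSD : (sY * D * sY).PosSemidef := by
    have := hD.posSemidef.mul_mul_conjTranspose_same sY
    rwa [conjTranspose_eq_transpose_of_trivial, hsYt] at this
  have htr : Matrix.trace (sY * D * sY) = Matrix.trace (D * Y) := by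
    rw [Matrix.trace_mul_comm, ← Matrix.mul_assoc, hsYY, Matrix.trace_mul_comm]
  have hbound : frob (sY * D * sY) ≤ Matrix.trace (D * Y) := htr ▸ frob_le_trace hPSD
  calc frob (hSbar.posSemidef.sqrt * Y * hSbar.posSemidef.sqrt - 1)
      = frob ((sY * S * sY - 1) - Δκ • (sY * D * sY)) := by rw [h1, decomp]
    _ ≤ frob (sY * S * sY - 1) + frob (Δκ • (sY * D * sY)) := frob_sub_le _ _
    _ = frob (sY * S * sY - 1) + Δκ * frob (sY * D * sY) := by
        rw [frob_smul, abs_of_pos hΔκ]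
    _ ≤ δ + Δκ * Matrix.trace (D * Y) := by
        refine add_le_add (h2 ▸ hδ) (mul_le_mul_of_nonneg_left hbound hΔκ.le)
    _ = δ + β := by rw [hβ]
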